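/- arXiv:2506.06542 — 2 statements merged into one kernel-verified Lean document; each statement's English description precedes it below -/
import Mathlib

section
/- Fix θ_t ∈ ℝ^d and let q(·|θ_t) be a strictly positive, continuously differentiable probability density on ℝ^d. Let p be a likelihood family such that for every x ∈ ℝ^k the map θ ↦ p(x|θ) is continuously differentiable, and let S : ℝ^k → ℝ^d be measurable. Assume the boundary condition: for every x ∈ ℝ^k and every i ∈ {1,…,d}, the function θ ↦ p(x|θ) q(θ|θ_t) and its i-th partial derivative in θ are Lebesgue-integrable over ℝ^d and ∫_{ℝ^d} ∂/∂θ_i [ p(x|θ) q(θ|θ_t) ] dθ = 0. Assume moreover that the functions (x,θ) ↦ ‖∇_θ log p(x|θ)‖², ‖S(x)‖², S(x)·∇_θ log p(x|θ), and S(x)·∇_θ log q(θ|θ_t) are all integrable with respect to the joint density p(x|θ) q(θ|θ_t) on ℝ^k × ℝ^d. Then ∫∫ ‖∇_θ log p(x|θ) − S(x)‖² p(x|θ) q(θ|θ_t) dx dθ = ∫∫ [ ‖S(x)‖² + 2 S(x)·∇_θ log q(θ|θ_t) ] p(x|θ) q(θ|θ_t) dx dθ + ∫∫ ‖∇_θ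 log p(x|θ)‖² p(x|θ) q(θ|θ_t) dx dθ. -/
/-!
Expanding the square, `‖∇log p - S‖² = ‖∇log p‖² + ‖S‖² - 2⟪S, ∇log p⟫`, so the identity amounts to
`∫∫ (⟪S, ∇log p⟫ + ⟪S, ∇log q⟫) p q = 0`. Since `∇log p · p q + ∇log q · p q = ∇(p q)`, this
integrand is the derivative of `θ ↦ p(x|θ) q(θ)` in the direction `S x`; by linearity its
`θ`-integral is a combination of the integrals of the partial derivatives, which vanish by the
boundary condition, and Fubini finishes the argument.
-/

open MeasureTheory RealInnerProductSpace

section ScoreIdentities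

variable {E : Type*} [NormedAddCommGroup E] [InnerProductSpace ℝ E] [CompleteSpace E]
  {f g : E → ℝ} {x : E}

theorem inner_gradient_log_mul_self (hf : DifferentiableAt ℝ f x) (hfx : f x ≠ 0) (v : E) :
    ⟪v, gradient (fun y => Real.log (f y)) x⟫ * f x = fderiv ℝ f x v := by
  rw [real_inner_comm, inner_gradient_left, (hf.hasFDerivAt.log hfx).fderiv]
  simp only [smul_apply, smul_eq_mul]
  field_simp

theorem inner_gradient_log_add_mul_mul (hf : DifferentiableAt ℝ f x)
    (hg : DifferentiableAt ℝ g x) (hfx : f x ≠ 0) (hgx : g x ≠ 0) (v : E) :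
    (⟪v, gradient (fun y => Real.log (f y)) x⟫ + ⟪v, gradient (fun y => Real.log (g y)) x⟫)
        * (f x * g x) = fderiv ℝ (fun y => f y * g y) x v := by
  rw [fderiv_fun_mul hf hg]
  simp only [add_apply, smul_apply, smul_eq_mul, ← inner_gradient_log_mul_self hf hfx v,
    ← inner_gradient_log_mul_self hg hgx v]
  ring

end ScoreIdentities

section Integrals

variable {α : Type*} [MeasurableSpace α] {μ : Measure α}

theorem integral_apply_eq_zero_of_basis {E ι : Type*} [NormedAddCommGroup E] [NormedSpace ℝ E]
    [Fintype ι] (b : Module.Basis ι ℝ E) {L : α → E →L[ℝ] ℝ}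
    (hint : ∀ i, Integrable (fun a => L a (b i)) μ) (hzero : ∀ i, ∫ a, L a (b i) ∂μ = 0)
    (v : E) : ∫ a, L a v ∂μ = 0 := by
  have hexpand : ∀ a, L a v = ∑ i, b.repr v i * L a (b i) := fun a => by
    conv_lhs => rw [← b.sum_repr v]
    simp only [map_sum, map_smul, smul_eq_mul]
  simp_rw [hexpand]
  rw [integral_finsetSum _ fun i _ => (hint i).const_mul _]
  simp only [integral_const_mul, hzero, mul_zero, Finset.sum_const_zero]

theorem integral_prod_eq_zero_of_forall_integral_eq_zero {β : Type*} [MeasurableSpace β]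
    {ν : Measure β} [SFinite μ] [SFinite ν] {F : α × β → ℝ} (hF : Integrable F (μ.prod ν))
    (h : ∀ x, ∫ y, F (x, y) ∂ν = 0) : ∫ z, F z ∂(μ.prod ν) = 0 := by
  simp only [integral_prod F hF, h, integral_zero]

theorem integral_norm_sub_sq_mul_eq {E : Type*} [NormedAddCommGroup E] [InnerProductSpace ℝ E]
    {g s l : α → E} {w : α → ℝ}
    (h1 : Integrable (fun a => ‖g a‖ ^ 2 * w a) μ) (h2 : Integrable (fun a => ‖s a‖ ^ 2 * w a) μ)
    (h3 : Integrable (fun a => ⟪s a, g a⟫ * w a) μ) (h4 : Integrable (fun a => ⟪s a, l a⟫ * w a) μ)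
    (hcross : ∫ a, (⟪s a, g a⟫ + ⟪s a, l a⟫) * w a ∂μ = 0) :
    ∫ a, ‖g a - s a‖ ^ 2 * w a ∂μ
      = ∫ a, (‖s a‖ ^ 2 + 2 * ⟪s a, l a⟫) * w a ∂μ + ∫ a, ‖g a‖ ^ 2 * w a ∂μ := by
  have hleft : ∫ a, ‖g a - s a‖ ^ 2 * w a ∂μ = ∫ a, ‖g a‖ ^ 2 * w a ∂μ
      + ∫ a, ‖s a‖ ^ 2 * w a ∂μ - 2 * ∫ a, ⟪s a, g a⟫ * w a ∂μ := by
    rw [← integral_add h1 h2, ← integral_const_mul,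
      ← integral_sub (h1.fun_add h2) (h3.const_mul 2)]
    refine integral_congr_ae (ae_of_all _ fun a => ?_)
    simp only [norm_sub_sq_real, real_inner_comm (g a)]
    ring
  have hright : ∫ a, (‖s a‖ ^ 2 + 2 * ⟪s a, l a⟫) * w a ∂μ
      = ∫ a, ‖s a‖ ^ 2 * w a ∂μ + 2 * ∫ a, ⟪s a, l a⟫ * w a ∂μ := by
    rw [← integral_const_mul, ← integral_add h2 (h4.const_mul 2)]
    exact integral_congr_ae (ae_of_all _ fun a => by ring)
  have hsplit : ∫ a, (⟪s a, g a⟫ + ⟪s a, l a⟫) * w a ∂μ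
      = ∫ a, ⟪s a, g a⟫ * w a ∂μ + ∫ a, ⟪s a, l a⟫ * w a ∂μ := by
    simp only [add_mul, integral_add h3 h4]
  linarith

end Integrals

theorem local_fisher_score_matching_identity_general
    (d k : ℕ)
    -- `q` is the proposal density `q(· | θt)` : strictly positive, C¹ probability density
    (q : EuclideanSpace ℝ (Fin d) → ℝ)
    (hq_pos : ∀ θ, 0 < q θ)
    (hq_smooth : ContDiff ℝ 1 q)
    -- `p θ x` is the likelihood family `p(x|θ)`
    (p : EuclideanSpace ℝ (Fin d) → EuclideanSpace ℝ (Fin k) → ℝ)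
    (hp_pos : ∀ θ x, 0 < p θ x)
    (hp_smooth : ∀ x, ContDiff ℝ 1 (fun θ => p θ x))
    -- the score model
    (S : EuclideanSpace ℝ (Fin k) → EuclideanSpace ℝ (Fin d))
    -- boundary condition: integrability of `θ ↦ p(x|θ) q(θ|θt)` and of its partial
    -- derivatives, and vanishing of the integral of each partial derivative
    (hbd_int' : ∀ (x : EuclideanSpace ℝ (Fin k)) (i : Fin d),
      Integrable (fun θ =>
        fderiv ℝ (fun θ' => p θ' x * q θ') θ (EuclideanSpace.single i 1)))
    (hbd : ∀ (x : EuclideanSpace ℝ (Fin k)) (i : Fin d),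
      ∫ θ, fderiv ℝ (fun θ' => p θ' x * q θ') θ (EuclideanSpace.single i 1) = 0)
    -- joint integrability of the four integrands against the joint density
    (hint1 : Integrable (fun z : EuclideanSpace ℝ (Fin k) × EuclideanSpace ℝ (Fin d) =>
      ‖gradient (fun θ => Real.log (p θ z.1)) z.2‖ ^ 2 * (p z.2 z.1 * q z.2)))
    (hint2 : Integrable (fun z : EuclideanSpace ℝ (Fin k) × EuclideanSpace ℝ (Fin d) =>
      ‖S z.1‖ ^ 2 * (p z.2 z.1 * q z.2)))
    (hint3 : Integrable (fun z : EuclideanSpace ℝ (Fin k) × EuclideanSpace ℝ (Fin d) =>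
      ⟪S z.1, gradient (fun θ => Real.log (p θ z.1)) z.2⟫ * (p z.2 z.1 * q z.2)))
    (hint4 : Integrable (fun z : EuclideanSpace ℝ (Fin k) × EuclideanSpace ℝ (Fin d) =>
      ⟪S z.1, gradient (fun θ => Real.log (q θ)) z.2⟫ * (p z.2 z.1 * q z.2))) :
    ∫ z : EuclideanSpace ℝ (Fin k) × EuclideanSpace ℝ (Fin d),
        ‖gradient (fun θ => Real.log (p θ z.1)) z.2 - S z.1‖ ^ 2 * (p z.2 z.1 * q z.2)
      = (∫ z : EuclideanSpace ℝ (Fin k) × EuclideanSpace ℝ (Fin d),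
          (‖S z.1‖ ^ 2 + 2 * ⟪S z.1, gradient (fun θ => Real.log (q θ)) z.2⟫)
            * (p z.2 z.1 * q z.2))
        + ∫ z : EuclideanSpace ℝ (Fin k) × EuclideanSpace ℝ (Fin d),
            ‖gradient (fun θ => Real.log (p θ z.1)) z.2‖ ^ 2 * (p z.2 z.1 * q z.2) := by
  have hscore : ∀ x θ, (⟪S x, gradient (fun θ' => Real.log (p θ' x)) θ⟫
      + ⟪S x, gradient (fun θ' => Real.log (q θ')) θ⟫) * (p θ x * q θ)
      = fderiv ℝ (fun θ' => p θ' x * q θ') θ (S x) := fun x θ =>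
    inner_gradient_log_add_mul_mul ((hp_smooth x).differentiable one_ne_zero θ)
      (hq_smooth.differentiable one_ne_zero θ) (hp_pos θ x).ne' (hq_pos θ).ne' (S x)
  have hslice : ∀ x, ∫ θ, fderiv ℝ (fun θ' => p θ' x * q θ') θ (S x) = 0 := fun x =>
    integral_apply_eq_zero_of_basis (EuclideanSpace.basisFun (Fin d) ℝ).toBasis
      (by simpa using hbd_int' x) (by simpa using hbd x) (S x)
  have hjoint : Integrable (fun z : EuclideanSpace ℝ (Fin k) × EuclideanSpace ℝ (Fin d) =>
      fderiv ℝ (fun θ' => p θ' z.1 * q θ') z.2 (S z.1)) :=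
    (hint3.fun_add hint4).congr (ae_of_all _ fun z => by simp only [← add_mul, hscore])
  refine integral_norm_sub_sq_mul_eq hint1 hint2 hint3 hint4 ?_
  simp only [hscore]
  exact integral_prod_eq_zero_of_forall_integral_eq_zero hjoint hslice

/-- **Local Fisher Score Matching identity** (Theorem 1 of the paper).
The explicit Fisher score matching objective equals, up to the additive constant
`∫∫ ‖∇_θ log p(x|θ)‖² p q`, the tractable objective involving only the proposal score. -/
theorem local_fisher_score_matching_identity
    (d k : ℕ) (hd : 0 < d) (hk : 0 < k)
    (θt : EuclideanSpace ℝ (Fin d))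
    -- `q` is the proposal density `q(· | θt)` : strictly positive, C¹ probability density
    (q : EuclideanSpace ℝ (Fin d) → ℝ)
    (hq_pos : ∀ θ, 0 < q θ)
    (hq_smooth : ContDiff ℝ 1 q)
    (hq_prob : ∫ θ, q θ = 1)
    -- `p θ x` is the likelihood family `p(x|θ)`
    (p : EuclideanSpace ℝ (Fin d) → EuclideanSpace ℝ (Fin k) → ℝ)
    (hp_meas : Measurable (Function.uncurry p))
    (hp_pos : ∀ θ x, 0 < p θ x)
    (hp_prob : ∀ θ, ∫ x, p θ x = 1)
    (hp_smooth : ∀ x, ContDiff ℝ 1 (fun θ => p θ x))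
    -- the score model
    (S : EuclideanSpace ℝ (Fin k) → EuclideanSpace ℝ (Fin d))
    (hS_meas : Measurable S)
    -- boundary condition: integrability of `θ ↦ p(x|θ) q(θ|θt)` and of its partial
    -- derivatives, and vanishing of the integral of each partial derivative
    (hbd_int : ∀ x, Integrable (fun θ => p θ x * q θ))
    (hbd_int' : ∀ (x : EuclideanSpace ℝ (Fin k)) (i : Fin d),
      Integrable (fun θ =>
        fderiv ℝ (fun θ' => p θ' x * q θ') θ (EuclideanSpace.single i 1)))
    (hbd : ∀ (x : EuclideanSpace ℝ (Fin k)) (i : Fin d),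
      ∫ θ, fderiv ℝ (fun θ' => p θ' x * q θ') θ (EuclideanSpace.single i 1) = 0)
    -- joint integrability of the four integrands against the joint density
    (hint1 : Integrable (fun z : EuclideanSpace ℝ (Fin k) × EuclideanSpace ℝ (Fin d) =>
      ‖gradient (fun θ => Real.log (p θ z.1)) z.2‖ ^ 2 * (p z.2 z.1 * q z.2)))
    (hint2 : Integrable (fun z : EuclideanSpace ℝ (Fin k) × EuclideanSpace ℝ (Fin d) =>
      ‖S z.1‖ ^ 2 * (p z.2 z.1 * q z.2)))
    (hint3 : Integrable (fun z : EuclideanSpace ℝ (Fin k) × EuclideanSpace ℝ (Fin d) =>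
      ⟪S z.1, gradient (fun θ => Real.log (p θ z.1)) z.2⟫ * (p z.2 z.1 * q z.2)))
    (hint4 : Integrable (fun z : EuclideanSpace ℝ (Fin k) × EuclideanSpace ℝ (Fin d) =>
      ⟪S z.1, gradient (fun θ => Real.log (q θ)) z.2⟫ * (p z.2 z.1 * q z.2))) :
    ∫ z : EuclideanSpace ℝ (Fin k) × EuclideanSpace ℝ (Fin d),
        ‖gradient (fun θ => Real.log (p θ z.1)) z.2 - S z.1‖ ^ 2 * (p z.2 z.1 * q z.2)
      = (∫ z : EuclideanSpace ℝ (Fin k) × EuclideanSpace ℝ (Fin d),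
          (‖S z.1‖ ^ 2 + 2 * ⟪S z.1, gradient (fun θ => Real.log (q θ)) z.2⟫)
            * (p z.2 z.1 * q z.2))
        + ∫ z : EuclideanSpace ℝ (Fin k) × EuclideanSpace ℝ (Fin d),
            ‖gradient (fun θ => Real.log (p θ z.1)) z.2‖ ^ 2 * (p z.2 z.1 * q z.2) :=
  local_fisher_score_matching_identity_general d k q hq_pos hq_smooth p hp_pos hp_smooth S hbd_int'
    hbd hint1 hint2 hint3 hint4
end

section
/- Fix x ∈ ℝ^k, θ_t ∈ ℝ^d, σ > 0 and L ≥ 0. Let p be a likelihood family such that θ ↦ log p(x|θ) is differentiable with L-Lipschitz gradient g(x;·) = ∇_θ log p(x|·). Let q_σ(θ|θ_t) = (2πσ²)^{−d/2} exp(−‖θ−θ_t‖²/(2σ²)), Z = ∫_{ℝ^d} p(x|θ) q_σ(θ|θ_t) dθ ∈ (0,∞), π(θ) = p(x|θ) q_σ(θ|θ_t)/Z the induced posterior density, and M = sup_{θ∈ℝ^d} p(x|θ)/Z (assumed finite), which equals sup_θ π(θ)/q_σ(θ|θ_t). Assume θ ↦ ‖g(x;θ)‖ is π-integrable. Then ‖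 ∫_{ℝ^d} g(x;θ) π(θ) dθ − g(x;θ_t) ‖ ≤ L · √d · σ · M. -/
/-!
Since `g` is `L`-Lipschitz and `π ≤ M q_σ` pointwise,
`‖E_π g - g θt‖ ≤ E_π ‖g θ - g θt‖ ≤ L M E_q ‖θ - θt‖`.
The Gaussian `q_σ` is a product of one-dimensional normal densities of variance `σ²`, so
`E_q ‖θ - θt‖² = d σ²`, and averaging `r ≤ r² / (2c) + c / 2` with `c = √d σ` gives
`E_q ‖θ - θt‖ ≤ √d σ`.
-/

open MeasureTheory

/-- The isotropic Gaussian proposal density `q_σ(θ | θt) = (2πσ²)^{-d/2} exp(-‖θ-θt‖²/(2σ²))`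
on `ℝ^d`. -/
noncomputable def gaussianProposal (d : ℕ) (σ : ℝ)
    (θ θt : EuclideanSpace ℝ (Fin d)) : ℝ :=
  (2 * Real.pi * σ ^ 2) ^ (-(d : ℝ) / 2) * Real.exp (-‖θ - θt‖ ^ 2 / (2 * σ ^ 2))

open ProbabilityTheory NNReal

lemma integral_gaussianPDFReal_mul_sub_sq (μ : ℝ) {v : ℝ≥0} (hv : v ≠ 0) :
    ∫ t, gaussianPDFReal μ v t * (t - μ) ^ 2 = v := by
  have h := variance_fun_id_gaussianReal (μ := μ) (v := v)
  rwa [variance_eq_integral measurable_id'.aemeasurable, integral_id_gaussianReal,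
    integral_gaussianReal_eq_integral_smul hv] at h

-- Integrable because its integral `v` is nonzero.
lemma integrable_gaussianPDFReal_mul_sub_sq (μ : ℝ) {v : ℝ≥0} (hv : v ≠ 0) :
    Integrable fun t => gaussianPDFReal μ v t * (t - μ) ^ 2 :=
  .of_integral_ne_zero <| by rw [integral_gaussianPDFReal_mul_sub_sq μ hv]; exact_mod_cast hv

lemma le_sq_div_add_div (r : ℝ) {c : ℝ} (hc : 0 < c) : r ≤ r ^ 2 / (2 * c) + c / 2 := by
  rw [div_add_div _ _ (by positivity) two_ne_zero, le_div_iff₀ (by positivity)]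
  nlinarith [sq_nonneg (r - c)]

theorem norm_integral_smul_sub_le {E F : Type*} [NormedAddCommGroup E] [MeasurableSpace E]
    {μ : Measure E} [NormedAddCommGroup F] [NormedSpace ℝ F] [CompleteSpace F]
    {π q : E → ℝ} {g : E → F} {K : ℝ≥0} {M : ℝ} (a : E) (hπ_nonneg : ∀ θ, 0 ≤ π θ)
    (hπ_int : Integrable π μ) (hπ_one : ∫ θ, π θ ∂μ = 1) (hπg : Integrable (fun θ => π θ • g θ) μ)
    (hg : LipschitzWith K g) (hπq : ∀ θ, π θ ≤ M * q θ)
    (hq : Integrable (fun θ => q θ * ‖θ - a‖) μ) :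
    ‖∫ θ, π θ • g θ ∂μ - g a‖ ≤ K * M * ∫ θ, q θ * ‖θ - a‖ ∂μ := by
  have hcentre : ∫ θ, π θ • g θ ∂μ - g a = ∫ θ, π θ • (g θ - g a) ∂μ := by
    simp_rw [smul_sub]
    rw [integral_sub hπg (hπ_int.smul_const _), integral_smul_const, hπ_one, one_smul]
  rw [hcentre, ← integral_const_mul]
  refine norm_integral_le_of_norm_le (hq.const_mul _) (ae_of_all _ fun θ => ?_)
  calc ‖π θ • (g θ - g a)‖ = π θ * ‖g θ - g a‖ := by
        rw [norm_smul, Real.norm_of_nonneg (hπ_nonneg θ)]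
    _ ≤ (M * q θ) * (K * ‖θ - a‖) :=
        mul_le_mul (hπq θ) (hg.norm_sub_le θ a) (norm_nonneg _) ((hπ_nonneg θ).trans (hπq θ))
    _ = K * M * (q θ * ‖θ - a‖) := by ring

section ProductDensity

variable {ι : Type*} [Fintype ι]

lemma integral_euclideanSpace_prod (φ : ι → ℝ → ℝ) :
    ∫ θ : EuclideanSpace ℝ ι, ∏ j, φ j (θ j) = ∏ j, ∫ t, φ j t := by
  rw [← (PiLp.volume_preserving_toLp ι).integral_comp
    (MeasurableEquiv.toLp 2 (ι → ℝ)).measurableEmbedding]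
  exact integral_fintype_prod_eq_prod φ

lemma integrable_euclideanSpace_prod {φ : ι → ℝ → ℝ} (hφ : ∀ j, Integrable (φ j)) :
    Integrable fun θ : EuclideanSpace ℝ ι => ∏ j, φ j (θ j) := by
  rw [← (PiLp.volume_preserving_toLp ι).integrable_comp_emb
    (MeasurableEquiv.toLp 2 (ι → ℝ)).measurableEmbedding]
  exact Integrable.fintype_prod hφ

variable [DecidableEq ι]

lemma prod_mul_apply_eq_prod_mul_ite (φ : ι → ℝ → ℝ) (h : ℝ → ℝ) (i : ι) (y : ι → ℝ) :
    (∏ j, φ j (y j)) * h (y i) = ∏ j, φ j (y j) * if j = i then h (y j) else 1 := by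
  rw [Finset.prod_mul_distrib, Finset.prod_ite_eq']
  simp

lemma integral_euclideanSpace_prod_mul_apply (φ : ι → ℝ → ℝ) (h : ℝ → ℝ) (i : ι)
    (hφ : ∀ j ≠ i, ∫ t, φ j t = 1) :
    ∫ θ : EuclideanSpace ℝ ι, (∏ j, φ j (θ j)) * h (θ i) = ∫ t, φ i t * h t := by
  simp_rw [prod_mul_apply_eq_prod_mul_ite φ h i]
  rw [integral_euclideanSpace_prod (fun j t => φ j t * if j = i then h t else 1),
    Finset.prod_eq_single i]
  · simp
  · intro j _ hj
    simpa [hj] using hφ j hj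
  · simp

lemma integrable_euclideanSpace_prod_mul_apply {φ : ι → ℝ → ℝ} {h : ℝ → ℝ} {i : ι}
    (hφ : ∀ j, Integrable (φ j)) (hφh : Integrable fun t => φ i t * h t) :
    Integrable fun θ : EuclideanSpace ℝ ι => (∏ j, φ j (θ j)) * h (θ i) := by
  simp_rw [prod_mul_apply_eq_prod_mul_ite φ h i]
  refine integrable_euclideanSpace_prod (φ := fun j t => φ j t * if j = i then h t else 1)
    fun j => ?_
  by_cases hj : j = i
  · subst hj; simpa using hφh
  · simpa [hj] using hφ j

end ProductDensity

section GaussianProposal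

variable {d : ℕ} {σ : ℝ} (θt : EuclideanSpace ℝ (Fin d))

lemma gaussianProposal_pos (θ : EuclideanSpace ℝ (Fin d)) (hσ : σ ≠ 0) :
    0 < gaussianProposal d σ θ θt := by
  unfold gaussianProposal
  have : 0 < 2 * Real.pi * σ ^ 2 := by positivity
  positivity

lemma continuous_gaussianProposal : Continuous fun θ => gaussianProposal d σ θ θt := by
  unfold gaussianProposal
  fun_prop

lemma gaussianProposal_eq_prod (hσ : σ ≠ 0) (θ : EuclideanSpace ℝ (Fin d)) :
    gaussianProposal d σ θ θt = ∏ i, gaussianPDFReal (θt i) (σ ^ 2).toNNReal (θ i) := by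
  have h2πσ : 0 ≤ 2 * Real.pi * σ ^ 2 := by positivity
  simp only [gaussianProposal, gaussianPDFReal, Real.coe_toNNReal _ (sq_nonneg σ),
    Finset.prod_mul_distrib, Finset.prod_const, Finset.card_univ, Fintype.card_fin,
    ← Real.exp_sum, EuclideanSpace.norm_sq_eq, Real.norm_eq_abs, sq_abs, ← Finset.sum_div,
    ← Finset.sum_neg_distrib, PiLp.sub_apply]
  rw [Real.sqrt_eq_rpow, ← Real.rpow_neg h2πσ, ← Real.rpow_mul_natCast h2πσ]
  ring_nf

lemma integrable_gaussianProposal (hσ : σ ≠ 0) :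
    Integrable fun θ => gaussianProposal d σ θ θt := by
  simp_rw [gaussianProposal_eq_prod θt hσ]
  exact integrable_euclideanSpace_prod fun i => integrable_gaussianPDFReal _ _

lemma integral_gaussianProposal (hσ : σ ≠ 0) :
    ∫ θ, gaussianProposal d σ θ θt = 1 := by
  have hv : (σ ^ 2).toNNReal ≠ 0 := by simpa using hσ
  simp_rw [gaussianProposal_eq_prod θt hσ, integral_euclideanSpace_prod,
    integral_gaussianPDFReal_eq_one _ hv, Finset.prod_const_one]

lemma gaussianProposal_mul_norm_sub_sq (hσ : σ ≠ 0) (θ : EuclideanSpace ℝ (Fin d)) :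
    gaussianProposal d σ θ θt * ‖θ - θt‖ ^ 2 =
      ∑ i, (∏ j, gaussianPDFReal (θt j) (σ ^ 2).toNNReal (θ j)) * (θ i - θt i) ^ 2 := by
  simp [gaussianProposal_eq_prod θt hσ, EuclideanSpace.norm_sq_eq, Finset.mul_sum]

lemma integrable_gaussianProposal_mul_norm_sub_sq (hσ : σ ≠ 0) :
    Integrable fun θ => gaussianProposal d σ θ θt * ‖θ - θt‖ ^ 2 := by
  have hv : (σ ^ 2).toNNReal ≠ 0 := by simpa using hσ
  simp_rw [gaussianProposal_mul_norm_sub_sq θt hσ]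
  exact integrable_finsetSum _ fun i _ => integrable_euclideanSpace_prod_mul_apply (i := i)
    (fun j => integrable_gaussianPDFReal _ _) (integrable_gaussianPDFReal_mul_sub_sq _ hv)

lemma integral_gaussianProposal_mul_norm_sub_sq (hσ : σ ≠ 0) :
    ∫ θ, gaussianProposal d σ θ θt * ‖θ - θt‖ ^ 2 = d * σ ^ 2 := by
  have hv : (σ ^ 2).toNNReal ≠ 0 := by simpa using hσ
  simp_rw [gaussianProposal_mul_norm_sub_sq θt hσ]
  rw [integral_finsetSum _ fun i _ => integrable_euclideanSpace_prod_mul_apply (i := i)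
    (fun j => integrable_gaussianPDFReal _ _) (integrable_gaussianPDFReal_mul_sub_sq _ hv)]
  have hcoord (i : Fin d) : ∫ θ : EuclideanSpace ℝ (Fin d),
      (∏ j, gaussianPDFReal (θt j) (σ ^ 2).toNNReal (θ j)) * (θ i - θt i) ^ 2 = σ ^ 2 := by
    rw [integral_euclideanSpace_prod_mul_apply _ (fun t => (t - θt i) ^ 2) i
      (fun j _ => integral_gaussianPDFReal_eq_one _ hv),
      integral_gaussianPDFReal_mul_sub_sq _ hv, Real.coe_toNNReal _ (sq_nonneg σ)]
  simp [hcoord]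


lemma integrable_gaussianProposal_mul_norm_sub (hσ : σ ≠ 0) :
    Integrable fun θ => gaussianProposal d σ θ θt * ‖θ - θt‖ := by
  refine (((integrable_gaussianProposal_mul_norm_sub_sq θt hσ).div_const 2).add
    ((integrable_gaussianProposal θt hσ).mul_const (1 / 2))).mono'
    ((continuous_gaussianProposal θt).mul
      (continuous_id.sub continuous_const).norm).aestronglyMeasurable
    (ae_of_all _ fun θ => ?_)
  have hq := (gaussianProposal_pos θt θ hσ).le
  rw [Real.norm_of_nonneg (by positivity)]
  calc gaussianProposal d σ θ θt * ‖θ - θt‖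
      ≤ gaussianProposal d σ θ θt * (‖θ - θt‖ ^ 2 / (2 * 1) + 1 / 2) :=
        mul_le_mul_of_nonneg_left (le_sq_div_add_div _ one_pos) hq
    _ = _ := by simp only [Pi.add_apply]; ring

lemma integral_gaussianProposal_mul_norm_sub_le (hd : 0 < d) (hσ : 0 < σ) :
    ∫ θ, gaussianProposal d σ θ θt * ‖θ - θt‖ ≤ √d * σ := by
  set c := √d * σ
  have hc : 0 < c := by positivity
  have hc_sq : c ^ 2 = d * σ ^ 2 := by rw [mul_pow, Real.sq_sqrt d.cast_nonneg]
  have hsq := (integrable_gaussianProposal_mul_norm_sub_sq θt hσ.ne').div_const (2 * c)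
  have hone := (integrable_gaussianProposal θt hσ.ne').mul_const (c / 2)
  calc ∫ θ, gaussianProposal d σ θ θt * ‖θ - θt‖
      ≤ ∫ θ, (gaussianProposal d σ θ θt * ‖θ - θt‖ ^ 2 / (2 * c)
          + gaussianProposal d σ θ θt * (c / 2)) := by
        refine integral_mono (integrable_gaussianProposal_mul_norm_sub θt hσ.ne') (hsq.add hone)
          fun θ => ?_
        have hq := (gaussianProposal_pos θt θ hσ.ne').le
        calc gaussianProposal d σ θ θt * ‖θ - θt‖
            ≤ gaussianProposal d σ θ θt * (‖θ - θt‖ ^ 2 / (2 * c) + c / 2) :=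
              mul_le_mul_of_nonneg_left (le_sq_div_add_div _ hc) hq
          _ = _ := by ring
    _ = c := by
        rw [integral_add hsq hone, integral_div, integral_mul_const,
          integral_gaussianProposal_mul_norm_sub_sq θt hσ.ne',
          integral_gaussianProposal θt hσ.ne', ← hc_sq]
        field_simp
        ring

end GaussianProposal

theorem fsm_pointwise_bias_bound_general
    (d k : ℕ) (hd : 0 < d)
    (x : EuclideanSpace ℝ (Fin k)) (θt : EuclideanSpace ℝ (Fin d))
    (σ L : ℝ) (hσ : 0 < σ) (hL : 0 ≤ L)
    -- `p θ x'` is the likelihood family `p(x'|θ)`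
    (p : EuclideanSpace ℝ (Fin d) → EuclideanSpace ℝ (Fin k) → ℝ)
    (hp_meas : Measurable (Function.uncurry p))
    (hp_pos : ∀ θ x', 0 < p θ x')
    -- `g = ∇_θ log p(x|·)`, an `L`-Lipschitz gradient
    (g : EuclideanSpace ℝ (Fin d) → EuclideanSpace ℝ (Fin d))
    (hgLip : LipschitzWith (Real.toNNReal L) g)
    -- the normalizing constant `Z ∈ (0, ∞)`
    (Z : ℝ) (hZ : Z = ∫ θ, p θ x * gaussianProposal d σ θ θt)
    (hZ_int : Integrable (fun θ => p θ x * gaussianProposal d σ θ θt))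
    (hZ_pos : 0 < Z)
    -- the induced posterior density
    (pi : EuclideanSpace ℝ (Fin d) → ℝ)
    (hpi : ∀ θ, pi θ = p θ x * gaussianProposal d σ θ θt / Z)
    -- `M = sup_θ p(x|θ)/Z`, assumed finite
    (M : ℝ) (hM : M = ⨆ θ : EuclideanSpace ℝ (Fin d), p θ x / Z)
    (hMbdd : BddAbove (Set.range fun θ : EuclideanSpace ℝ (Fin d) => p θ x / Z))
    -- `θ ↦ ‖g(x;θ)‖` is π-integrable
    (hg_int : Integrable (fun θ => ‖g θ‖ * pi θ)) :
    ‖(∫ θ, pi θ • g θ) - g θt‖ ≤ L * Real.sqrt d * σ * M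
      ∧ M = ⨆ θ : EuclideanSpace ℝ (Fin d), pi θ / gaussianProposal d σ θ θt := by
  have hq_pos θ := gaussianProposal_pos θt θ hσ.ne'
  have hpi_eq : pi = fun θ => p θ x * gaussianProposal d σ θ θt / Z := funext hpi
  have hpi_nonneg θ : 0 ≤ pi θ := by
    rw [hpi]; exact (div_pos (mul_pos (hp_pos θ x) (hq_pos θ)) hZ_pos).le
  have hpi_le θ : pi θ ≤ M * gaussianProposal d σ θ θt := by
    rw [hpi, mul_div_right_comm, hM]
    exact mul_le_mul_of_nonneg_right (le_ciSup hMbdd θ) (hq_pos θ).le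
  have hpi_one : ∫ θ, pi θ = 1 := by
    rw [hpi_eq, integral_div, ← hZ, div_self hZ_pos.ne']
  have hpi_g : Integrable fun θ => pi θ • g θ := by
    have hpi_meas : Measurable pi := hpi_eq ▸
      (hp_meas.of_uncurry_right.mul (continuous_gaussianProposal θt).measurable).div_const Z
    refine hg_int.mono' (hpi_meas.aestronglyMeasurable.smul hgLip.continuous.aestronglyMeasurable)
      (ae_of_all _ fun θ => ?_)
    rw [norm_smul, Real.norm_of_nonneg (hpi_nonneg θ), mul_comm]
  have hM_nonneg : 0 ≤ M := hM ▸ (div_pos (hp_pos θt x) hZ_pos).le.trans (le_ciSup hMbdd θt)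
  refine ⟨?_, ?_⟩
  · calc ‖(∫ θ, pi θ • g θ) - g θt‖
        ≤ L.toNNReal * M * ∫ θ, gaussianProposal d σ θ θt * ‖θ - θt‖ :=
          norm_integral_smul_sub_le θt hpi_nonneg (hpi_eq ▸ hZ_int.div_const Z) hpi_one hpi_g
            hgLip hpi_le (integrable_gaussianProposal_mul_norm_sub θt hσ.ne')
      _ ≤ L * M * (√d * σ) := by
          rw [Real.coe_toNNReal _ hL]
          gcongr
          exact integral_gaussianProposal_mul_norm_sub_le θt hd hσ
      _ = L * √d * σ * M := by ring
  · simp_rw [hM, hpi, div_right_comm _ Z, mul_div_cancel_right₀ _ (hq_pos _).ne']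

/-- **Pointwise bias bound for the Bayes-optimal FSM estimator** (Step 1 of the proof of
Theorem 4 of the paper): the deviation of the posterior mean of the Fisher score from the
true Fisher score at `θt` is at most `L √d σ M`, where `M = sup_θ p(x|θ)/Z`, which equals
`sup_θ π(θ)/q_σ(θ|θt)`. -/
theorem fsm_pointwise_bias_bound
    (d k : ℕ) (hd : 0 < d) (hk : 0 < k)
    (x : EuclideanSpace ℝ (Fin k)) (θt : EuclideanSpace ℝ (Fin d))
    (σ L : ℝ) (hσ : 0 < σ) (hL : 0 ≤ L)
    -- `p θ x'` is the likelihood family `p(x'|θ)`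
    (p : EuclideanSpace ℝ (Fin d) → EuclideanSpace ℝ (Fin k) → ℝ)
    (hp_meas : Measurable (Function.uncurry p))
    (hp_pos : ∀ θ x', 0 < p θ x')
    (hp_prob : ∀ θ, ∫ x', p θ x' = 1)
    -- `g = ∇_θ log p(x|·)`, an `L`-Lipschitz gradient
    (g : EuclideanSpace ℝ (Fin d) → EuclideanSpace ℝ (Fin d))
    (hg : ∀ θ, HasGradientAt (fun θ' => Real.log (p θ' x)) (g θ) θ)
    (hgLip : LipschitzWith (Real.toNNReal L) g)
    -- the normalizing constant `Z ∈ (0, ∞)`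
    (Z : ℝ) (hZ : Z = ∫ θ, p θ x * gaussianProposal d σ θ θt)
    (hZ_int : Integrable (fun θ => p θ x * gaussianProposal d σ θ θt))
    (hZ_pos : 0 < Z)
    -- the induced posterior density
    (pi : EuclideanSpace ℝ (Fin d) → ℝ)
    (hpi : ∀ θ, pi θ = p θ x * gaussianProposal d σ θ θt / Z)
    -- `M = sup_θ p(x|θ)/Z`, assumed finite
    (M : ℝ) (hM : M = ⨆ θ : EuclideanSpace ℝ (Fin d), p θ x / Z)
    (hMbdd : BddAbove (Set.range fun θ : EuclideanSpace ℝ (Fin d) => p θ x / Z))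
    -- `θ ↦ ‖g(x;θ)‖` is π-integrable
    (hg_int : Integrable (fun θ => ‖g θ‖ * pi θ)) :
    ‖(∫ θ, pi θ • g θ) - g θt‖ ≤ L * Real.sqrt d * σ * M
      ∧ M = ⨆ θ : EuclideanSpace ℝ (Fin d), pi θ / gaussianProposal d σ θ θt :=
  fsm_pointwise_bias_bound_general d k hd x θt σ L hσ hL p hp_meas hp_pos g hgLip Z hZ hZ_int hZ_pos
    pi hpi M hM hMbdd hg_int
end
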